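/- arXiv:2605.07360 — 2 statements merged into one kernel-verified Lean document; each statement's English description precedes it below -/
import Mathlib

section
/- Let θ_1, θ_2, θ_3 : ℝ → ℝ be a solution of the identical Kuramoto model for N = 3, let Δ_1 = θ_1 − θ_2, Δ_2 = θ_2 − θ_3, Δ_3 = θ_3 − θ_1, and define the complex-valued functions X_j(t) = exp(i·Δ_j(t)) for j = 1, 2, 3. Then each X_j is differentiable with X_j'(t) = (K/6)·(∑_{k=1}^3 (X_k(t) − 1/X_k(t)))·X_j(t) − (K/2)·(X_j(t)² − 1). -/
/-!
Each `Xⱼ = exp(i Δⱼ)` satisfies `Xⱼ' = i Δⱼ' Xⱼ`. For `N = 3` the difference of two Kuramoto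
velocities is `Δⱼ' = (K/3)(∑ₖ sin Δₖ − 3 sin Δⱼ)`, and the identities `Xₖ − 1/Xₖ = 2i sin Δₖ`,
`Xⱼ² − 1 = (Xⱼ − 1/Xⱼ) Xⱼ` turn `i Δⱼ' Xⱼ` into the Riccati right-hand side.
-/

open Complex

noncomputable def kuramotoVelocity (ω K p q r x : ℝ) : ℝ :=
  ω + K / 3 * (Real.sin (p - x) + Real.sin (q - x) + Real.sin (r - x))

lemma kuramotoVelocity_cycle (ω K p q r x : ℝ) :
    kuramotoVelocity ω K p q r x = kuramotoVelocity ω K q r p x := by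
  unfold kuramotoVelocity
  ring

lemma kuramotoVelocity_sub_kuramotoVelocity (ω K p q r : ℝ) :
    kuramotoVelocity ω K p q r p - kuramotoVelocity ω K p q r q =
      K / 3 * ((Real.sin (p - q) + Real.sin (q - r) + Real.sin (r - p)) - 3 * Real.sin (p - q)) := by
  have hqp : Real.sin (q - p) = -Real.sin (p - q) := by rw [← Real.sin_neg, neg_sub]
  have hrq : Real.sin (r - q) = -Real.sin (q - r) := by rw [← Real.sin_neg, neg_sub]
  simp only [kuramotoVelocity, sub_self, Real.sin_zero, hqp, hrq]
  ring

lemma HasDerivAt.cexp_I_mul {f : ℝ → ℝ} {f' t : ℝ} (hf : HasDerivAt f f' t) :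
    HasDerivAt (fun s => cexp (I * (f s : ℂ))) (I * f' * cexp (I * (f t : ℂ))) t := by
  convert (hf.ofReal_comp.const_mul I).cexp using 1
  ring

lemma exp_I_mul_sub_one_div (x : ℝ) :
    cexp (I * (x : ℂ)) - 1 / cexp (I * (x : ℂ)) = 2 * I * Real.sin x := by
  rw [one_div, ← exp_neg, mul_comm I, ← neg_mul, exp_mul_I, exp_mul_I, cos_neg, sin_neg,
    ofReal_sin]
  ring

lemma HasDerivAt.cexp_I_mul_riccati {Δ : ℝ → ℝ} {K S t : ℝ}
    (hΔ : HasDerivAt Δ (K / 3 * (S - 3 * Real.sin (Δ t))) t) :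
    HasDerivAt (fun s => cexp (I * (Δ s : ℂ)))
      ((K : ℂ) / 6 * (2 * I * S) * cexp (I * (Δ t : ℂ))
        - (K : ℂ) / 2 * (cexp (I * (Δ t : ℂ)) ^ 2 - 1)) t := by
  have hsq : cexp (I * (Δ t : ℂ)) ^ 2 - 1
      = (cexp (I * (Δ t : ℂ)) - 1 / cexp (I * (Δ t : ℂ))) * cexp (I * (Δ t : ℂ)) := by
    field_simp
  convert hΔ.cexp_I_mul using 1
  rw [hsq, exp_I_mul_sub_one_div]
  push_cast
  ring

lemma hasDerivAt_riccati_of_kuramoto {a b c : ℝ → ℝ} {X Y Z : ℝ → ℂ} {ω K t : ℝ}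
    (ha : HasDerivAt a (kuramotoVelocity ω K (a t) (b t) (c t) (a t)) t)
    (hb : HasDerivAt b (kuramotoVelocity ω K (a t) (b t) (c t) (b t)) t)
    (hX : ∀ s, X s = cexp (I * (a s - b s : ℝ))) (hY : Y t = cexp (I * (b t - c t : ℝ)))
    (hZ : Z t = cexp (I * (c t - a t : ℝ))) :
    HasDerivAt X
      ((K : ℂ) / 6 * ((X t - 1 / X t) + (Y t - 1 / Y t) + (Z t - 1 / Z t)) * X t
        - (K : ℂ) / 2 * (X t ^ 2 - 1)) t := by
  have hΔ : HasDerivAt (fun s => a s - b s) (K / 3 * ((Real.sin (a t - b t) + Real.sin (b t - c t)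
      + Real.sin (c t - a t)) - 3 * Real.sin (a t - b t))) t := by
    rw [← kuramotoVelocity_sub_kuramotoVelocity]
    exact ha.sub hb
  rw [hY, hZ, funext hX]
  beta_reduce
  convert hΔ.cexp_I_mul_riccati using 3
  simp only [exp_I_mul_sub_one_div]
  push_cast
  ring

/-- For the identical Kuramoto model with `N = 3` and
`Xⱼ = exp(i Δⱼ)`, each `Xⱼ` is differentiable with
`Xⱼ' = (K/6)·(∑ₖ (Xₖ − 1/Xₖ))·Xⱼ − (K/2)·(Xⱼ² − 1)` (a Riccati-type equation). -/
theorem riccati_equation_Xj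
    (ω K : ℝ) (θ1 θ2 θ3 : ℝ → ℝ)
    (h1 : ∀ t : ℝ, HasDerivAt θ1
      (ω + K / 3 * (Real.sin (θ1 t - θ1 t) + Real.sin (θ2 t - θ1 t) + Real.sin (θ3 t - θ1 t))) t)
    (h2 : ∀ t : ℝ, HasDerivAt θ2
      (ω + K / 3 * (Real.sin (θ1 t - θ2 t) + Real.sin (θ2 t - θ2 t) + Real.sin (θ3 t - θ2 t))) t)
    (h3 : ∀ t : ℝ, HasDerivAt θ3
      (ω + K / 3 * (Real.sin (θ1 t - θ3 t) + Real.sin (θ2 t - θ3 t) + Real.sin (θ3 t - θ3 t))) t)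
    (Δ1 Δ2 Δ3 : ℝ → ℝ)
    (hΔ1 : ∀ t, Δ1 t = θ1 t - θ2 t)
    (hΔ2 : ∀ t, Δ2 t = θ2 t - θ3 t)
    (hΔ3 : ∀ t, Δ3 t = θ3 t - θ1 t)
    (X1 X2 X3 : ℝ → ℂ)
    (hX1 : ∀ t, X1 t = Complex.exp (I * (Δ1 t : ℂ)))
    (hX2 : ∀ t, X2 t = Complex.exp (I * (Δ2 t : ℂ)))
    (hX3 : ∀ t, X3 t = Complex.exp (I * (Δ3 t : ℂ))) :
    ∀ t : ℝ,
      HasDerivAt X1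
        ((K : ℂ) / 6 * ((X1 t - 1 / X1 t) + (X2 t - 1 / X2 t) + (X3 t - 1 / X3 t)) * X1 t
          - (K : ℂ) / 2 * ((X1 t) ^ 2 - 1)) t ∧
      HasDerivAt X2
        ((K : ℂ) / 6 * ((X1 t - 1 / X1 t) + (X2 t - 1 / X2 t) + (X3 t - 1 / X3 t)) * X2 t
          - (K : ℂ) / 2 * ((X2 t) ^ 2 - 1)) t ∧
      HasDerivAt X3
        ((K : ℂ) / 6 * ((X1 t - 1 / X1 t) + (X2 t - 1 / X2 t) + (X3 t - 1 / X3 t)) * X3 t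
          - (K : ℂ) / 2 * ((X3 t) ^ 2 - 1)) t := by
  have hX1' s : X1 s = cexp (I * (θ1 s - θ2 s : ℝ)) := by rw [hX1, hΔ1]
  have hX2' s : X2 s = cexp (I * (θ2 s - θ3 s : ℝ)) := by rw [hX2, hΔ2]
  have hX3' s : X3 s = cexp (I * (θ3 s - θ1 s : ℝ)) := by rw [hX3, hΔ3]
  intro t
  have v1 : HasDerivAt θ1 (kuramotoVelocity ω K (θ1 t) (θ2 t) (θ3 t) (θ1 t)) t := h1 t
  have v2 : HasDerivAt θ2 (kuramotoVelocity ω K (θ1 t) (θ2 t) (θ3 t) (θ2 t)) t := h2 t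
  have v3 : HasDerivAt θ3 (kuramotoVelocity ω K (θ1 t) (θ2 t) (θ3 t) (θ3 t)) t := h3 t
  refine ⟨hasDerivAt_riccati_of_kuramoto v1 v2 hX1' (hX2' t) (hX3' t), ?_, ?_⟩
  · rw [kuramotoVelocity_cycle] at v2 v3
    convert hasDerivAt_riccati_of_kuramoto v2 v3 hX2' (hX3' t) (hX1' t) using 3
    ring
  · rw [← kuramotoVelocity_cycle] at v3 v1
    convert hasDerivAt_riccati_of_kuramoto v3 v1 hX3' (hX1' t) (hX2' t) using 3
    ring
end

section
/- Let ω, K be real constants and let θ_1, θ_2, θ_3, θ_4 : ℝ → ℝ satisfy the identical Kuramoto model for N = 4: θ_j'(t) = ω + (K/4)·∑_{k=1}^4 sin(θ_k(t) − θ_j(t)). Define Δ_1 = θ_1 − θ_2, Δ_2 = θ_4 − θ_3, Δ_3 = θ_1 − θ_3, Δ_4 = θ_2 − θ_4, Δ_5 = θ_1 − θ_4, Δ_6 = θ_3 − θ_2, and ψ(t) = sin²(Δ_1(t)/2)·sin²(Δ_2(t)/2) / (sin((Δ_1(t)−Δ_2(t))/2)·sin((Δ_3(t)−Δ_4(t))/2)·sin((Δ_5(t)−Δ_6(t))/2)).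 Then at every time t at which sin((Δ_1−Δ_2)/2), sin((Δ_3−Δ_4)/2), and sin((Δ_5−Δ_6)/2) are all nonzero, ψ is differentiable at t and ψ'(t) = −K·ψ(t). -/
/-!
In the half-angle coordinates `x = (θ₁ - θ₂)/2`, `y = (θ₄ - θ₃)/2`,
`z = (θ₁ + θ₂ - θ₃ - θ₄)/2` the common frequency `ω` drops out and the flow closes up:
`x' = -(K/2) (cos x + cos y cos z) sin x`, symmetrically for `y`, and `z' = -K cos x cos y sin z`.
Since `sin(x - y) sin(x + y) = sin²x - sin²y`, the observable is
`ψ = sin²x · sin²y / ((sin²x - sin²y) · sin z)`, and each of the four factors satisfies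
`f' = a f` along the flow with an explicit rate `a`:
`-K cos x (cos x + cos y cos z)`, `-K cos y (cos y + cos x cos z)`,
`-K (1 - sin²x - sin²y + cos x cos y cos z)` and `-K cos x cos y cos z`.
The rates of a product add and those of a quotient subtract, so `ψ` has rate
`-K (cos²x + sin²x + cos²y + sin²y - 1) = -K`.
-/

open Real

theorem Real.sin_sub_mul_sin_add (x y : ℝ) :
    sin (x - y) * sin (x + y) = sin x ^ 2 - sin y ^ 2 := by
  rw [sin_sub, sin_add]
  linear_combination sin x ^ 2 * sin_sq_add_cos_sq y - sin y ^ 2 * sin_sq_add_cos_sq x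

section RateCalculus

variable {f g : ℝ → ℝ} {a b t : ℝ}

theorem HasDerivAt.mul_of_eq_mul (hf : HasDerivAt f (a * f t) t) (hg : HasDerivAt g (b * g t) t) :
    HasDerivAt (fun s => f s * g s) ((a + b) * (f t * g t)) t :=
  (hf.mul hg).congr_deriv (by ring)

theorem HasDerivAt.div_of_eq_mul (hf : HasDerivAt f (a * f t) t) (hg : HasDerivAt g (b * g t) t)
    (hg0 : g t ≠ 0) : HasDerivAt (fun s => f s / g s) ((a - b) * (f t / g t)) t :=
  (hf.div hg hg0).congr_deriv (by field_simp)

theorem HasDerivAt.sin_of_eq_mul_sin (hf : HasDerivAt f (a * Real.sin (f t)) t) :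
    HasDerivAt (fun s => Real.sin (f s)) (a * Real.cos (f t) * Real.sin (f t)) t :=
  hf.sin.congr_deriv (by ring)

theorem HasDerivAt.sin_sq_of_eq_mul_sin (hf : HasDerivAt f (a * Real.sin (f t)) t) :
    HasDerivAt (fun s => Real.sin (f s) ^ 2) (2 * a * Real.cos (f t) * Real.sin (f t) ^ 2) t :=
  (hf.sin.pow 2).congr_deriv (by ring)

end RateCalculus

theorem hasDerivAt_sin_sq_mul_sin_sq_div {K t : ℝ} {x y z : ℝ → ℝ}
    (hx : HasDerivAt x (-(K / 2) * (cos (x t) + cos (y t) * cos (z t)) * sin (x t)) t)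
    (hy : HasDerivAt y (-(K / 2) * (cos (y t) + cos (x t) * cos (z t)) * sin (y t)) t)
    (hz : HasDerivAt z (-K * cos (x t) * cos (y t) * sin (z t)) t)
    (hden : sin (x t - y t) * sin (x t + y t) * sin (z t) ≠ 0) :
    HasDerivAt (fun s => sin (x s) ^ 2 * sin (y s) ^ 2
        / (sin (x s - y s) * sin (x s + y s) * sin (z s)))
      (-K * (sin (x t) ^ 2 * sin (y t) ^ 2
        / (sin (x t - y t) * sin (x t + y t) * sin (z t)))) t := by
  have hX := hx.sin_sq_of_eq_mul_sin
  have hY := hy.sin_sq_of_eq_mul_sin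
  have hZ := hz.sin_of_eq_mul_sin
  have hD : HasDerivAt (fun s => sin (x s - y s) * sin (x s + y s))
      (-K * (1 - sin (x t) ^ 2 - sin (y t) ^ 2 + cos (x t) * cos (y t) * cos (z t))
        * (sin (x t - y t) * sin (x t + y t))) t := by
    simp only [sin_sub_mul_sin_add]
    refine (hX.sub hY).congr_deriv ?_
    linear_combination
      K * sin (y t) ^ 2 * sin_sq_add_cos_sq (y t) - K * sin (x t) ^ 2 * sin_sq_add_cos_sq (x t)
  refine ((hX.mul_of_eq_mul hY).div_of_eq_mul (hD.mul_of_eq_mul hZ) hden).congr_deriv ?_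
  set q := sin (x t) ^ 2 * sin (y t) ^ 2 / (sin (x t - y t) * sin (x t + y t) * sin (z t))
  linear_combination -K * q * (sin_sq_add_cos_sq (x t) + sin_sq_add_cos_sq (y t))

noncomputable def kuramoto4Velocity (ω K θ1 θ2 θ3 θ4 φ : ℝ) : ℝ :=
  ω + K / 4 * (sin (θ1 - φ) + sin (θ2 - φ) + sin (θ3 - φ) + sin (θ4 - φ))

section Kuramoto4

variable (ω K θ1 θ2 θ3 θ4 : ℝ)

local notation "v" => kuramoto4Velocity ω K θ1 θ2 θ3 θ4

theorem kuramoto4Velocity_one_sub_two :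
    (v θ1 - v θ2) / 2 = -(K / 2) * (cos ((θ1 - θ2) / 2) + cos ((θ4 - θ3) / 2)
      * cos ((θ1 + θ2 - θ3 - θ4) / 2)) * sin ((θ1 - θ2) / 2) := by
  obtain ⟨a, x, rfl, rfl⟩ : ∃ a x, θ1 = a + x ∧ θ2 = a - x :=
    ⟨(θ1 + θ2) / 2, (θ1 - θ2) / 2, by ring, by ring⟩
  obtain ⟨b, y, rfl, rfl⟩ : ∃ b y, θ3 = b - y ∧ θ4 = b + y :=
    ⟨(θ3 + θ4) / 2, (θ4 - θ3) / 2, by ring, by ring⟩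
  rw [show (a + x - (a - x)) / 2 = x by ring, show (b + y - (b - y)) / 2 = y by ring,
    show (a + x + (a - x) - (b - y) - (b + y)) / 2 = a - b by ring]
  simp only [kuramoto4Velocity, sub_self, sin_zero]
  rw [show a - x - (a + x) = -(2 * x) by ring, show a + x - (a - x) = 2 * x by ring,
    show b - y - (a + x) = -((a - b) + (x + y)) by ring,
    show b + y - (a + x) = -((a - b) + (x - y)) by ring,
    show b - y - (a - x) = -((a - b) - (x - y)) by ring,
    show b + y - (a - x) = -((a - b) - (x + y)) by ring]
  simp only [sin_neg, sin_two_mul, sin_add, sin_sub, cos_add, cos_sub]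
  ring

theorem kuramoto4Velocity_four_sub_three :
    (v θ4 - v θ3) / 2 = -(K / 2) * (cos ((θ4 - θ3) / 2) + cos ((θ1 - θ2) / 2)
      * cos ((θ1 + θ2 - θ3 - θ4) / 2)) * sin ((θ4 - θ3) / 2) := by
  obtain ⟨a, x, rfl, rfl⟩ : ∃ a x, θ1 = a + x ∧ θ2 = a - x :=
    ⟨(θ1 + θ2) / 2, (θ1 - θ2) / 2, by ring, by ring⟩
  obtain ⟨b, y, rfl, rfl⟩ : ∃ b y, θ3 = b - y ∧ θ4 = b + y :=
    ⟨(θ3 + θ4) / 2, (θ4 - θ3) / 2, by ring, by ring⟩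
  rw [show (a + x - (a - x)) / 2 = x by ring, show (b + y - (b - y)) / 2 = y by ring,
    show (a + x + (a - x) - (b - y) - (b + y)) / 2 = a - b by ring]
  simp only [kuramoto4Velocity, sub_self, sin_zero]
  rw [show b - y - (b + y) = -(2 * y) by ring, show b + y - (b - y) = 2 * y by ring,
    show a + x - (b + y) = (a - b) + (x - y) by ring,
    show a - x - (b + y) = (a - b) - (x + y) by ring,
    show a + x - (b - y) = (a - b) + (x + y) by ring,
    show a - x - (b - y) = (a - b) - (x - y) by ring]
  simp only [sin_neg, sin_two_mul, sin_add, sin_sub, cos_add, cos_sub]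
  ring

theorem kuramoto4Velocity_pair_sub_pair :
    (v θ1 + v θ2 - v θ3 - v θ4) / 2 = -K * cos ((θ1 - θ2) / 2) * cos ((θ4 - θ3) / 2)
      * sin ((θ1 + θ2 - θ3 - θ4) / 2) := by
  obtain ⟨a, x, rfl, rfl⟩ : ∃ a x, θ1 = a + x ∧ θ2 = a - x :=
    ⟨(θ1 + θ2) / 2, (θ1 - θ2) / 2, by ring, by ring⟩
  obtain ⟨b, y, rfl, rfl⟩ : ∃ b y, θ3 = b - y ∧ θ4 = b + y :=
    ⟨(θ3 + θ4) / 2, (θ4 - θ3) / 2, by ring, by ring⟩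
  rw [show (a + x - (a - x)) / 2 = x by ring, show (b + y - (b - y)) / 2 = y by ring,
    show (a + x + (a - x) - (b - y) - (b + y)) / 2 = a - b by ring]
  simp only [kuramoto4Velocity, sub_self, sin_zero]
  rw [show a - x - (a + x) = -(2 * x) by ring, show a + x - (a - x) = 2 * x by ring,
    show b - y - (b + y) = -(2 * y) by ring, show b + y - (b - y) = 2 * y by ring,
    show b - y - (a + x) = -((a - b) + (x + y)) by ring,
    show b + y - (a + x) = -((a - b) + (x - y)) by ring,
    show b - y - (a - x) = -((a - b) - (x - y)) by ring,
    show b + y - (a - x) = -((a - b) - (x + y)) by ring,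
    show a + x - (b + y) = (a - b) + (x - y) by ring,
    show a - x - (b + y) = (a - b) - (x + y) by ring,
    show a + x - (b - y) = (a - b) + (x + y) by ring,
    show a - x - (b - y) = (a - b) - (x - y) by ring]
  simp only [sin_neg, sin_two_mul, sin_add, sin_sub, cos_add, cos_sub]
  ring

end Kuramoto4

/-- For the identical Kuramoto model with `N = 4`, the observable
`ψ = sin²(Δ₁/2)·sin²(Δ₂/2)/(sin((Δ₁−Δ₂)/2)·sin((Δ₃−Δ₄)/2)·sin((Δ₅−Δ₆)/2))`
(with `Δ₁ = θ₁−θ₂`, `Δ₂ = θ₄−θ₃`, `Δ₃ = θ₁−θ₃`, `Δ₄ = θ₂−θ₄`, `Δ₅ = θ₁−θ₄`,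
`Δ₆ = θ₃−θ₂`) is a Koopman eigenfunction with eigenvalue `−K`: at every time at
which the three denominator factors are nonzero, `ψ' = −K·ψ`. -/
theorem koopman_eigenfunction_N4
    (ω K : ℝ) (θ1 θ2 θ3 θ4 : ℝ → ℝ)
    (h1 : ∀ t : ℝ, HasDerivAt θ1 (ω + K / 4 *
      (Real.sin (θ1 t - θ1 t) + Real.sin (θ2 t - θ1 t)
        + Real.sin (θ3 t - θ1 t) + Real.sin (θ4 t - θ1 t))) t)
    (h2 : ∀ t : ℝ, HasDerivAt θ2 (ω + K / 4 *
      (Real.sin (θ1 t - θ2 t) + Real.sin (θ2 t - θ2 t)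
        + Real.sin (θ3 t - θ2 t) + Real.sin (θ4 t - θ2 t))) t)
    (h3 : ∀ t : ℝ, HasDerivAt θ3 (ω + K / 4 *
      (Real.sin (θ1 t - θ3 t) + Real.sin (θ2 t - θ3 t)
        + Real.sin (θ3 t - θ3 t) + Real.sin (θ4 t - θ3 t))) t)
    (h4 : ∀ t : ℝ, HasDerivAt θ4 (ω + K / 4 *
      (Real.sin (θ1 t - θ4 t) + Real.sin (θ2 t - θ4 t)
        + Real.sin (θ3 t - θ4 t) + Real.sin (θ4 t - θ4 t))) t)
    (Δ1 Δ2 Δ3 Δ4 Δ5 Δ6 : ℝ → ℝ)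
    (hΔ1 : ∀ t, Δ1 t = θ1 t - θ2 t)
    (hΔ2 : ∀ t, Δ2 t = θ4 t - θ3 t)
    (hΔ3 : ∀ t, Δ3 t = θ1 t - θ3 t)
    (hΔ4 : ∀ t, Δ4 t = θ2 t - θ4 t)
    (hΔ5 : ∀ t, Δ5 t = θ1 t - θ4 t)
    (hΔ6 : ∀ t, Δ6 t = θ3 t - θ2 t)
    (ψ : ℝ → ℝ)
    (hψ : ∀ t, ψ t = Real.sin (Δ1 t / 2) ^ 2 * Real.sin (Δ2 t / 2) ^ 2
      / (Real.sin ((Δ1 t - Δ2 t) / 2) * Real.sin ((Δ3 t - Δ4 t) / 2)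
          * Real.sin ((Δ5 t - Δ6 t) / 2))) :
    ∀ t : ℝ,
      Real.sin ((Δ1 t - Δ2 t) / 2) ≠ 0 →
      Real.sin ((Δ3 t - Δ4 t) / 2) ≠ 0 →
      Real.sin ((Δ5 t - Δ6 t) / 2) ≠ 0 →
      HasDerivAt ψ (-K * ψ t) t := by
  intro t hA hB hC
  set x : ℝ → ℝ := fun s => (θ1 s - θ2 s) / 2
  set y : ℝ → ℝ := fun s => (θ4 s - θ3 s) / 2
  set z : ℝ → ℝ := fun s => (θ1 s + θ2 s - θ3 s - θ4 s) / 2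
  have hx : HasDerivAt x (-(K / 2) * (cos (x t) + cos (y t) * cos (z t)) * sin (x t)) t :=
    (((h1 t).sub (h2 t)).div_const 2).congr_deriv (kuramoto4Velocity_one_sub_two ω K _ _ _ _)
  have hy : HasDerivAt y (-(K / 2) * (cos (y t) + cos (x t) * cos (z t)) * sin (y t)) t :=
    (((h4 t).sub (h3 t)).div_const 2).congr_deriv (kuramoto4Velocity_four_sub_three ω K _ _ _ _)
  have hz : HasDerivAt z (-K * cos (x t) * cos (y t) * sin (z t)) t :=
    (((((h1 t).add (h2 t)).sub (h3 t)).sub (h4 t)).div_const 2).congr_deriv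
      (kuramoto4Velocity_pair_sub_pair ω K _ _ _ _)
  have hΔx : ∀ s, Δ1 s / 2 = x s := fun s => by rw [hΔ1]
  have hΔy : ∀ s, Δ2 s / 2 = y s := fun s => by rw [hΔ2]
  have hΔxy : ∀ s, (Δ1 s - Δ2 s) / 2 = x s - y s := fun s => by rw [hΔ1, hΔ2]; ring
  have hΔyx : ∀ s, (Δ3 s - Δ4 s) / 2 = x s + y s := fun s => by rw [hΔ3, hΔ4]; ring
  have hΔz : ∀ s, (Δ5 s - Δ6 s) / 2 = z s := fun s => by rw [hΔ5, hΔ6]; ring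
  have hψxyz : ∀ s, ψ s = sin (x s) ^ 2 * sin (y s) ^ 2
      / (sin (x s - y s) * sin (x s + y s) * sin (z s)) := fun s => by
    rw [hψ, hΔx, hΔy, hΔxy, hΔyx, hΔz]
  rw [show ψ = _ from funext hψxyz]
  refine hasDerivAt_sin_sq_mul_sin_sq_div hx hy hz ?_
  rw [← hΔxy, ← hΔyx, ← hΔz]
  exact mul_ne_zero (mul_ne_zero hA hB) hC
end
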